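/- Let S ⊆ ℤ^m be a vector monoid (a subsemigroup of (ℤ^m,+) containing 0), A ⊆ S a finite subset, C = cone(A), and S_C = S ∩ C. If −x ∈ C for every x ∈ A, then there exists a finite set T ⊆ S_C such that S_C = T + gp(A); moreover S_C is a group, so S_C = S_C ∩ (−S_C) = gp(S_C). -/

import Mathlib

/-!
Because `-a ∈ C` for every `a ∈ A`, the cone `C` is closed under negation. The key fact is that
every integer point `x ∈ C` has a positive multiple in the monoid `ℕA`: by Carathéodory, `x` is a
nonnegative combination of linearly independent elements of `A`; applying a `ℚ`-linear retraction
`ℝ → ℚ` coordinatewise gives a rational combination, which by independence is the same one, so the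
coefficients are nonnegative rationals and denominators can be cleared. For `x ∈ S_C` with
`n • (-x) ∈ ℕA ⊆ S` this gives `-x = n • (-x) + (n - 1) • x ∈ S`, so `S_C` is a subgroup of `ℤ^m`.
It is finitely generated and `S_C / gp(A)` is torsion, hence finite; coset representatives form `T`.
-/

open Set Filter Topology MeasureTheory ProbabilityTheory Pointwise

noncomputable section

/-- Coercion of an integer vector to a real vector. -/
def zc {m : ℕ} (x : Fin m → ℤ) : Fin m → ℝ := fun i => (x i : ℝ)

/-- Convex conical hull: all finite nonnegative real combinations of elements of `A`. -/
def coneHull {m : ℕ} (A : Set (Fin m → ℝ)) : Set (Fin m → ℝ) :=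
  { x | ∃ (s : Finset (Fin m → ℝ)) (w : (Fin m → ℝ) → ℝ),
      ↑s ⊆ A ∧ (∀ a ∈ s, 0 ≤ w a) ∧ x = ∑ a ∈ s, w a • a }

/-- `S_C = S ∩ cone(A)` (the integer points of `S` lying in the real cone of `A`). -/
def SC {m : ℕ} (S : Set (Fin m → ℤ)) (A : Finset (Fin m → ℤ)) : Set (Fin m → ℤ) :=
  {x ∈ S | zc x ∈ coneHull (zc '' (A : Set (Fin m → ℤ)))}

section Caratheodory

variable {𝕜 E : Type*} [Field 𝕜] [LinearOrder 𝕜] [IsStrictOrderedRing 𝕜]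
  [AddCommGroup E] [Module 𝕜 E]

theorem exists_erase_sum_smul_eq_of_not_linearIndepOn [DecidableEq E] {s : Finset E}
    (h : ¬LinearIndepOn 𝕜 id (s : Set E)) {w : E → 𝕜} (hw : ∀ a ∈ s, 0 ≤ w a) :
    ∃ a₀ ∈ s, ∃ w' : E → 𝕜, (∀ a ∈ s.erase a₀, 0 ≤ w' a) ∧
      ∑ a ∈ s.erase a₀, w' a • a = ∑ a ∈ s, w a • a := by
  obtain ⟨g₀, hg₀, i, his, hgi⟩ := not_linearIndepOn_finset_iff.mp h
  -- rescaled so that the coefficient at `i` is `1 > 0`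
  set g : E → 𝕜 := fun a => g₀ a / g₀ i
  have hg : ∑ a ∈ s, g a • a = 0 := by
    simp only [id] at hg₀
    simp only [g, div_eq_inv_mul, mul_smul, ← Finset.smul_sum, hg₀, smul_zero]
  obtain ⟨a₀, ha₀, hmin⟩ : ∃ a₀ ∈ {a ∈ s | 0 < g a}, ∀ a ∈ {a ∈ s | 0 < g a},
      w a₀ / g a₀ ≤ w a / g a :=
    Finset.exists_min_image _ _ ⟨i, Finset.mem_filter.mpr ⟨his, by simp [g, hgi]⟩⟩
  obtain ⟨ha₀s, hga₀⟩ := Finset.mem_filter.mp ha₀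
  set c := w a₀ / g a₀
  have hc : 0 ≤ c := div_nonneg (hw a₀ ha₀s) hga₀.le
  refine ⟨a₀, ha₀s, fun a => w a - c * g a, fun a ha => ?_, ?_⟩
  · have has := Finset.mem_of_mem_erase ha
    rcases lt_or_ge 0 (g a) with hga | hga
    · have := hmin a (Finset.mem_filter.mpr ⟨has, hga⟩)
      rw [div_le_div_iff₀ hga₀ hga] at this
      rw [sub_nonneg, div_mul_eq_mul_div, div_le_iff₀ hga₀]
      linarith
    · nlinarith [hw a has]
  · rw [Finset.sum_erase _ (by simp [c, hga₀.ne'])]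
    simp only [sub_smul, Finset.sum_sub_distrib, mul_smul, ← Finset.smul_sum, hg, smul_zero,
      sub_zero]

theorem exists_linearIndepOn_sum_smul_eq (s : Finset E) (w : E → 𝕜) (hw : ∀ a ∈ s, 0 ≤ w a) :
    ∃ t ⊆ s, ∃ v : E → 𝕜, (∀ a ∈ t, 0 ≤ v a) ∧ LinearIndepOn 𝕜 id (t : Set E) ∧
      ∑ a ∈ t, v a • a = ∑ a ∈ s, w a • a := by
  classical
  induction s using Finset.strongInduction generalizing w with
  | H s ih =>
    by_cases hs : LinearIndepOn 𝕜 id (s : Set E)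
    · exact ⟨s, subset_rfl, w, hw, hs, rfl⟩
    obtain ⟨a₀, ha₀, w', hw', hsum⟩ := exists_erase_sum_smul_eq_of_not_linearIndepOn hs hw
    obtain ⟨t, hts, v, hv, ht, hvt⟩ := ih _ (Finset.erase_ssubset ha₀) w' hw'
    exact ⟨t, hts.trans (Finset.erase_subset _ _), v, hv, ht, hvt.trans hsum⟩

end Caratheodory

theorem mem_range_ratCast_of_linearIndepOn {ι : Type*} {t : Finset (ι → ℝ)}
    (ht : ∀ a ∈ t, ∀ i, a i ∈ range ((↑) : ℚ → ℝ)) (hli : LinearIndepOn ℝ id (t : Set (ι → ℝ)))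
    {y : ι → ℝ} (hy : ∀ i, y i ∈ range ((↑) : ℚ → ℝ)) {v : (ι → ℝ) → ℝ}
    (hyv : y = ∑ a ∈ t, v a • a) : ∀ a ∈ t, v a ∈ range ((↑) : ℚ → ℝ) := by
  obtain ⟨φ, hφ⟩ := (Algebra.linearMap ℚ ℝ).exists_leftInverse_of_injective
    (LinearMap.ker_eq_bot.mpr (algebraMap ℚ ℝ).injective)
  have hφq (q : ℚ) : φ q = q := LinearMap.congr_fun hφ q
  let Φ : (ι → ℝ) →ₗ[ℚ] (ι → ℝ) :=
    LinearMap.pi fun i => Algebra.linearMap ℚ ℝ ∘ₗ φ ∘ₗ LinearMap.proj i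
  have hΦ (r : ℝ) {a : ι → ℝ} (ha : ∀ i, a i ∈ range ((↑) : ℚ → ℝ)) :
      Φ (r • a) = (φ r : ℝ) • a := by
    funext i
    obtain ⟨q, hq⟩ := ha i
    simp only [Φ, LinearMap.pi_apply, LinearMap.comp_apply, LinearMap.proj_apply,
      Pi.smul_apply, smul_eq_mul, ← hq, Algebra.linearMap_apply, eq_ratCast]
    rw [mul_comm, ← Rat.smul_def, map_smul, smul_eq_mul, Rat.cast_mul, mul_comm]
  have hyφ : y = ∑ a ∈ t, (φ (v a) : ℝ) • a := by
    have h1 : Φ y = y := by simpa [show φ 1 = 1 by exact_mod_cast hφq 1] using hΦ 1 hy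
    rw [← h1, hyv, map_sum]
    exact Finset.sum_congr rfl fun a ha => hΦ (v a) (ht a ha)
  have hdiff : ∑ a ∈ t, (v a - φ (v a)) • id a = 0 := by
    simp only [sub_smul, Finset.sum_sub_distrib, id, ← hyv, ← hyφ, sub_self]
  exact fun a ha => ⟨φ (v a), (sub_eq_zero.mp (linearIndepOn_finset_iff.mp hli _ hdiff a ha)).symm⟩

theorem exists_pos_nsmul_sum_mem {M ι : Type*} [AddCommMonoid M] (P : AddSubmonoid M)
    (s : Finset ι) (f : ι → M) (h : ∀ i ∈ s, ∃ n : ℕ, 0 < n ∧ n • f i ∈ P) :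
    ∃ n : ℕ, 0 < n ∧ n • ∑ i ∈ s, f i ∈ P := by
  refine Finset.sum_induction f (fun y => ∃ n : ℕ, 0 < n ∧ n • y ∈ P) ?_
    ⟨1, one_pos, by simp [P.zero_mem]⟩ h
  rintro y z ⟨k, hk, hky⟩ ⟨l, hl, hlz⟩
  refine ⟨k * l, Nat.mul_pos hk hl, ?_⟩
  rw [smul_add, mul_comm, mul_smul, mul_comm, mul_smul]
  exact P.add_mem (P.nsmul_mem hky l) (P.nsmul_mem hlz k)

theorem exists_pos_nsmul_ratCast_smul_mem {M : Type*} [AddCommGroup M] [Module ℝ M]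
    {P : AddSubmonoid M} {a : M} (ha : a ∈ P) {q : ℚ} (hq : 0 ≤ q) :
    ∃ n : ℕ, 0 < n ∧ n • ((q : ℝ) • a) ∈ P := by
  refine ⟨q.den, q.den_pos, ?_⟩
  have : q.den • ((q : ℝ) • a) = q.num.toNat • a := by
    rw [← Nat.cast_smul_eq_nsmul ℝ, smul_smul, ← Nat.cast_smul_eq_nsmul ℝ]
    have h : (q.den : ℚ) * q = (q.num.toNat : ℚ) := by
      rw [Rat.den_mul_eq_num, ← Int.cast_natCast, Int.toNat_of_nonneg (Rat.num_nonneg.mpr hq)]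
    congr 1
    exact_mod_cast h
  rw [this]
  exact P.nsmul_mem ha _

section ConeHull

variable {m : ℕ} {A : Set (Fin m → ℝ)}

theorem subset_coneHull : A ⊆ coneHull A := fun a ha =>
  ⟨{a}, fun _ => 1, by simpa using ha, by simp, by simp⟩

theorem zero_mem_coneHull : (0 : Fin m → ℝ) ∈ coneHull A :=
  ⟨∅, fun _ => 0, by simp, by simp, by simp⟩

theorem add_mem_coneHull {x y : Fin m → ℝ} (hx : x ∈ coneHull A) (hy : y ∈ coneHull A) :
    x + y ∈ coneHull A := by
  classical
  obtain ⟨s, v, hs, hv, rfl⟩ := hx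
  obtain ⟨t, w, ht, hw, rfl⟩ := hy
  refine ⟨s ∪ t, fun a => (if a ∈ s then v a else 0) + (if a ∈ t then w a else 0),
    by simpa using union_subset hs ht, fun a _ => add_nonneg ?_ ?_, ?_⟩
  · split_ifs with h <;> simp [hv a, h]
  · split_ifs with h <;> simp [hw a, h]
  · simp only [add_smul, Finset.sum_add_distrib, ite_smul, zero_smul, Finset.sum_ite_mem,
      Finset.union_inter_cancel_left, Finset.union_inter_cancel_right]

theorem smul_mem_coneHull {c : ℝ} {x : Fin m → ℝ} (hc : 0 ≤ c) (hx : x ∈ coneHull A) :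
    c • x ∈ coneHull A := by
  obtain ⟨s, w, hs, hw, rfl⟩ := hx
  exact ⟨s, fun a => c * w a, hs, fun a ha => mul_nonneg hc (hw a ha), by
    simp only [Finset.smul_sum, smul_smul]⟩

theorem neg_mem_coneHull (hneg : ∀ a ∈ A, -a ∈ coneHull A) {x : Fin m → ℝ}
    (hx : x ∈ coneHull A) : -x ∈ coneHull A := by
  obtain ⟨s, w, hs, hw, rfl⟩ := hx
  rw [← Finset.sum_neg_distrib]
  refine Finset.sum_induction _ _ (fun _ _ => add_mem_coneHull) zero_mem_coneHull fun a ha => ?_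
  rw [← smul_neg]
  exact smul_mem_coneHull (hw a ha) (hneg a (hs ha))

end ConeHull

section IntegerPoints

def zcHom (m : ℕ) : (Fin m → ℤ) →+ (Fin m → ℝ) := AddMonoidHom.compLeft (Int.castAddHom ℝ) (Fin m)

variable {m : ℕ}

theorem coe_zcHom : ⇑(zcHom m) = zc := rfl

theorem zc_injective : Function.Injective (zc (m := m)) := fun _ _ h =>
  funext fun i => Int.cast_injective (congrFun h i)

theorem exists_pos_nsmul_mem_closure_of_zc_mem_coneHull {A : Set (Fin m → ℤ)} {x : Fin m → ℤ}
    (hx : zc x ∈ coneHull (zc '' A)) : ∃ n : ℕ, 0 < n ∧ n • x ∈ AddSubmonoid.closure A := by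
  obtain ⟨s, w, hsA, hw, hxs⟩ := hx
  obtain ⟨t, hts, v, hv, hli, hvt⟩ := exists_linearIndepOn_sum_smul_eq s w hw
  have hrat : ∀ a ∈ t, ∀ i, a i ∈ range ((↑) : ℚ → ℝ) := fun a ha i => by
    obtain ⟨b, -, rfl⟩ := hsA (hts ha)
    exact ⟨b i, by simp [zc]⟩
  have hv_rat := mem_range_ratCast_of_linearIndepOn hrat hli (fun i => ⟨x i, by simp [zc]⟩)
    (hxs.trans hvt.symm)
  suffices ∃ n : ℕ, 0 < n ∧ n • zc x ∈ AddSubmonoid.closure (zc '' A) by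
    obtain ⟨n, hn, hnx⟩ := this
    rw [← coe_zcHom, ← AddMonoidHom.map_mclosure] at hnx
    obtain ⟨y, hy, hyx⟩ := hnx
    refine ⟨n, hn, ?_⟩
    rwa [← zc_injective (hyx.trans (map_nsmul (zcHom m) n x).symm)]
  rw [hxs, ← hvt]
  refine exists_pos_nsmul_sum_mem _ _ _ fun a ha => ?_
  obtain ⟨q, hq⟩ := hv_rat a ha
  rw [← hq]
  exact exists_pos_nsmul_ratCast_smul_mem (AddSubmonoid.subset_closure (hsA (hts ha)))
    (by exact_mod_cast hq ▸ hv a ha)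

end IntegerPoints

section FiniteIndex

variable {G : Type*} [AddCommGroup G]

theorem finite_quotient_of_forall_exists_nsmul_mem [AddGroup.FG G] (H : AddSubgroup G)
    (h : ∀ x, ∃ n : ℕ, 0 < n ∧ n • x ∈ H) : Finite (G ⧸ H) := by
  refine AddCommGroup.finite_of_fg_isAddTorsion _ fun q => ?_
  induction q using QuotientAddGroup.induction_on with
  | H x =>
    obtain ⟨n, hn, hx⟩ := h x
    exact isOfFinAddOrder_iff_nsmul_eq_zero.mpr ⟨n, hn, (QuotientAddGroup.eq_zero_iff _).mpr hx⟩

theorem exists_finset_eq_add_of_finite_quotient {H K : AddSubgroup G} (hHK : H ≤ K)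
    [Finite (K ⧸ H.addSubgroupOf K)] :
    ∃ T : Finset G, (T : Set G) ⊆ K ∧ (K : Set G) = T + H := by
  classical
  have := Fintype.ofFinite (K ⧸ H.addSubgroupOf K)
  let rep : K ⧸ H.addSubgroupOf K → G := fun q => (Quotient.out q : K)
  have hrep (q : K ⧸ H.addSubgroupOf K) : rep q ∈ K := (Quotient.out q).2
  refine ⟨Finset.univ.image rep, by simp [Set.subset_def, hrep], ?_⟩
  ext x
  constructor
  · intro hx
    obtain ⟨h, hh⟩ := QuotientAddGroup.mk_out_eq_add (H.addSubgroupOf K) ⟨x, hx⟩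
    refine ⟨rep (⟨x, hx⟩ : K), Finset.mem_image_of_mem _ (Finset.mem_univ _), -(h : G),
      H.neg_mem (AddSubgroup.mem_addSubgroupOf.mp h.2), ?_⟩
    simp only [rep, hh, AddSubgroup.coe_add]
    abel
  · rintro ⟨t, ht, y, hy, rfl⟩
    obtain ⟨q, -, rfl⟩ := Finset.mem_image.mp ht
    exact K.add_mem (hrep q) (hHK hy)

end FiniteIndex

section VectorMonoid

variable {m : ℕ} (S : AddSubmonoid (Fin m → ℤ)) (A : Finset (Fin m → ℤ))

theorem zero_mem_SC : 0 ∈ SC S A :=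
  ⟨S.zero_mem, by rw [← coe_zcHom, map_zero]; exact zero_mem_coneHull⟩

theorem add_mem_SC {x y : Fin m → ℤ} (hx : x ∈ SC S A) (hy : y ∈ SC S A) : x + y ∈ SC S A :=
  ⟨S.add_mem hx.1 hy.1, by rw [← coe_zcHom, map_add, coe_zcHom]; exact add_mem_coneHull hx.2 hy.2⟩

theorem neg_mem_SC (hAS : (A : Set (Fin m → ℤ)) ⊆ S)
    (hneg : ∀ x ∈ A, -(zc x) ∈ coneHull (zc '' (A : Set (Fin m → ℤ)))) {x : Fin m → ℤ}
    (hx : x ∈ SC S A) : -x ∈ SC S A := by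
  have hnegC : zc (-x) ∈ coneHull (zc '' (A : Set (Fin m → ℤ))) := by
    rw [← coe_zcHom, map_neg, coe_zcHom]
    exact neg_mem_coneHull (by rintro _ ⟨b, hb, rfl⟩; exact hneg b hb) hx.2
  obtain ⟨n, hn, hnx⟩ := exists_pos_nsmul_mem_closure_of_zc_mem_coneHull hnegC
  obtain ⟨k, rfl⟩ := Nat.exists_eq_add_one_of_ne_zero hn.ne'
  have hdecomp : -x = (k + 1) • -x + k • x := by
    rw [succ_nsmul, smul_neg]
    abel
  refine ⟨?_, hnegC⟩
  rw [hdecomp]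
  exact S.add_mem (AddSubmonoid.closure_le.mpr hAS hnx) (S.nsmul_mem hx.1 k)

def addSubgroupSC (hAS : (A : Set (Fin m → ℤ)) ⊆ S)
    (hneg : ∀ x ∈ A, -(zc x) ∈ coneHull (zc '' (A : Set (Fin m → ℤ)))) :
    AddSubgroup (Fin m → ℤ) where
  carrier := SC S A
  zero_mem' := zero_mem_SC S A
  add_mem' := add_mem_SC S A
  neg_mem' := neg_mem_SC S A hAS hneg

end VectorMonoid

/-- if `−x ∈ C` for all `x ∈ A`, then `S_C = T + gp(A)` for some finite
`T ⊆ S_C`, and `S_C` is a group: `S_C = S_C ∩ (−S_C) = gp(S_C)`. -/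
theorem stmt5 {m : ℕ} (S : Set (Fin m → ℤ)) (h0S : (0 : Fin m → ℤ) ∈ S)
    (hSadd : ∀ x ∈ S, ∀ y ∈ S, x + y ∈ S)
    (A : Finset (Fin m → ℤ)) (hAS : (A : Set (Fin m → ℤ)) ⊆ S)
    (hneg : ∀ x ∈ A, -(zc x) ∈ coneHull (zc '' (A : Set (Fin m → ℤ)))) :
    ∃ T : Finset (Fin m → ℤ),
      (T : Set (Fin m → ℤ)) ⊆ SC S A ∧
      SC S A = (T : Set (Fin m → ℤ)) +
        (AddSubgroup.closure (A : Set (Fin m → ℤ)) : Set (Fin m → ℤ)) ∧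
      SC S A = SC S A ∩ (-(SC S A)) ∧
      SC S A = (AddSubgroup.closure (SC S A) : Set (Fin m → ℤ)) := by
  let S' : AddSubmonoid (Fin m → ℤ) :=
    { carrier := S, add_mem' := fun hx hy => hSadd _ hx _ hy, zero_mem' := h0S }
  let K := addSubgroupSC S' A hAS hneg
  have hK : (K : Set (Fin m → ℤ)) = SC S A := rfl
  let H := AddSubgroup.closure (A : Set (Fin m → ℤ))
  have hHK : H ≤ K :=
    (AddSubgroup.closure_le K).mpr fun a ha => ⟨hAS ha, subset_coneHull ⟨a, ha, rfl⟩⟩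
  have : AddGroup.FG K := Module.Finite.iff_addGroup_fg.mp
    (Module.Finite.iff_fg.mpr (IsNoetherian.noetherian (AddSubgroup.toIntSubmodule K)))
  have : Finite (K ⧸ H.addSubgroupOf K) := finite_quotient_of_forall_exists_nsmul_mem _ fun x => by
    obtain ⟨n, hn, hnx⟩ := exists_pos_nsmul_mem_closure_of_zc_mem_coneHull x.2.2
    exact ⟨n, hn, AddSubgroup.mem_addSubgroupOf.mpr
      (AddSubmonoid.closure_le.mpr AddSubgroup.subset_closure hnx)⟩
  obtain ⟨T, hTK, hT⟩ := exists_finset_eq_add_of_finite_quotient hHK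
  refine ⟨T, hTK, hT, (inter_eq_left.mpr fun x hx => neg_mem_SC S' A hAS hneg hx).symm, ?_⟩
  rw [← hK, AddSubgroup.closure_eq]
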